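/- Let B be an admissible bilinear form on 'f. If x and y are homogeneous elements of 'f of distinct weights (|x| ≠ |y| in ℕ[I]), then B(x,y) = 0. -/
import Mathlib


open scoped TensorProduct

set_option synthInstance.maxHeartbeats 1000000
set_option maxHeartbeats 1000000

noncomputable section

/-- The ground field `𝕂 = ℚ(q)`. -/
abbrev K : Type := RatFunc ℚ

/-- `q ∈ ℚ(q)`. -/
abbrev qvar : K := RatFunc.X

/-- The free associative algebra `'f` on generators `θ i`, `i ∈ I`. -/
abbrev F (I : Type) : Type := FreeAlgebra K I

/-- The generators `θ i` of `'f`. -/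
def θ {I : Type} (i : I) : F I := FreeAlgebra.ι K i

/-- A Cartan datum: a symmetric integer matrix with positive even diagonal such that
`2(i·j)/(i·i)` is a nonpositive integer for `i ≠ j`. -/
def CartanDatum {I : Type} (c : I → I → ℤ) : Prop :=
  (∀ i j, c i j = c j i) ∧ (∀ i, 0 < c i i ∧ Even (c i i)) ∧
    (∀ i j, i ≠ j → c i j ≤ 0 ∧ c i i ∣ 2 * c i j)

/-- `q_i = q^{(i·i)/2}`. -/
def qi {I : Type} (c : I → I → ℤ) (i : I) : K := qvar ^ (c i i / 2)

/-- The bilinear extension of `·` to weights: `ν·μ = Σ_{i,j} ν(i) μ(j) (i·j)`. -/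
def wtPair {I : Type} (c : I → I → ℤ) (ν μ : I →₀ ℕ) : ℤ :=
  ν.sum fun i a => μ.sum fun j b => (a : ℤ) * (b : ℤ) * c i j

/-- The subspace of `'f` of homogeneous elements of weight `ν ∈ ℕ[I]`: the span of
all words `θ_{i_1} ⋯ θ_{i_r}` whose letters have multiplicities `ν`. -/
def wtSpace {I : Type} [DecidableEq I] (ν : I →₀ ℕ) : Submodule K (F I) :=
  Submodule.span K
    {x | ∃ l : List I, Multiset.toFinsupp (l : Multiset I) = ν ∧ x = (l.map θ).prod}

/-- The twisted multiplication on `'f ⊗ 'f`: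
`(x₁⊗x₂)(y₁⊗y₂) = q^{-|x₂|·|y₁|} (x₁y₁)⊗(x₂y₂)` on homogeneous elements. -/
def IsTwistedMul {I : Type} [DecidableEq I] (c : I → I → ℤ)
    (m : F I ⊗[K] F I →ₗ[K] F I ⊗[K] F I →ₗ[K] F I ⊗[K] F I) : Prop :=
  ∀ (ν μ : I →₀ ℕ) (x₁ x₂ y₁ y₂ : F I), x₂ ∈ wtSpace ν → y₁ ∈ wtSpace μ →
    m (x₁ ⊗ₜ[K] x₂) (y₁ ⊗ₜ[K] y₂) =
      (qvar ^ (-(wtPair c ν μ))) • ((x₁ * y₁) ⊗ₜ[K] (x₂ * y₂))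

/-- `r : 'f → 'f ⊗ 'f` is an algebra homomorphism to the twisted tensor square with
`r(θ_i) = θ_i ⊗ 1 + 1 ⊗ θ_i`. -/
def IsComult {I : Type} (m : F I ⊗[K] F I →ₗ[K] F I ⊗[K] F I →ₗ[K] F I ⊗[K] F I)
    (r : F I →ₗ[K] F I ⊗[K] F I) : Prop :=
  r 1 = (1 : F I) ⊗ₜ[K] (1 : F I) ∧ (∀ x y, r (x * y) = m (r x) (r y)) ∧
    ∀ i, r (θ i) = θ i ⊗ₜ[K] 1 + 1 ⊗ₜ[K] θ i

/-- The bilinear form `B⊗B` on `'f ⊗ 'f`, `(B⊗B)(x₁⊗x₂, y₁⊗y₂) = B(x₁,y₁)B(x₂,y₂)`. -/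
def BB {I : Type} (B : F I →ₗ[K] F I →ₗ[K] K) :
    F I ⊗[K] F I →ₗ[K] F I ⊗[K] F I →ₗ[K] K :=
  LinearMap.BilinForm.tmul B B

/-- Admissibility of a bilinear form on `'f`. -/
def Admissible {I : Type} [DecidableEq I] (c : I → I → ℤ) (r : F I →ₗ[K] F I ⊗[K] F I)
    (B : F I →ₗ[K] F I →ₗ[K] K) : Prop :=
  B 1 1 = 1 ∧
    (∀ i j, B (θ i) (θ j) = if i = j then (1 - qi c i ^ 2)⁻¹ else 0) ∧
    (∀ x y y', B x (y * y') = BB B (r x) (y ⊗ₜ[K] y')) ∧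
    (∀ x x' y, B (x * x') y = BB B (x ⊗ₜ[K] x') (r y))



section Aux

variable {I : Type} [DecidableEq I]

lemma BB_tmul (B : F I →ₗ[K] F I →ₗ[K] K) (x₁ x₂ y₁ y₂ : F I) :
    BB B (x₁ ⊗ₜ[K] x₂) (y₁ ⊗ₜ[K] y₂) = B x₁ y₁ * B x₂ y₂ := by
  simp [BB, mul_comm]

/-- A word of letters `l` lies in the weight space of its multiset. -/
lemma word_mem_wtSpace (l : List I) :
    (l.map θ).prod ∈ wtSpace (Multiset.toFinsupp (l : Multiset I)) :=
  Submodule.subset_span ⟨l, rfl, rfl⟩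

variable (c : I → I → ℤ)
variable (m : F I ⊗[K] F I →ₗ[K] F I ⊗[K] F I →ₗ[K] F I ⊗[K] F I)
variable (r : F I →ₗ[K] F I ⊗[K] F I) (B : F I →ₗ[K] F I →ₗ[K] K)

/-- Splittings of a multiset of letters. -/
def splitSet (μ : Multiset I) : Set (F I ⊗[K] F I) :=
  {z | ∃ l₁ l₂ : List I, (↑l₁ + ↑l₂ : Multiset I) = μ ∧
    z = ((l₁.map θ).prod) ⊗ₜ[K] ((l₂.map θ).prod)}

lemma r_word_mem (hm : IsTwistedMul c m) (hr : IsComult m r) (l : List I) :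
    r ((l.map θ).prod) ∈ Submodule.span K (splitSet (↑l : Multiset I)) := by
  induction l with
  | nil =>
      simp only [List.map_nil, List.prod_nil, hr.1]
      exact Submodule.subset_span ⟨[], [], by simp, by simp⟩
  | cons j t ih =>
      have hprod : ((j :: t).map θ).prod = θ j * (t.map θ).prod := by simp
      rw [hprod, hr.2.1, hr.2.2]
      refine Submodule.span_induction
        (p := fun z _ => m (θ j ⊗ₜ[K] 1 + 1 ⊗ₜ[K] θ j) z ∈
          Submodule.span K (splitSet ((j :: t : List I) : Multiset I)))
        ?_ (by simp) ?_ ?_ ih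
      · rintro z ⟨l₁, l₂, hsum, rfl⟩
        rw [map_add, LinearMap.add_apply]
        refine Submodule.add_mem _ ?_ ?_
        · rw [hm 0 (Multiset.toFinsupp (↑l₁ : Multiset I)) (θ j) 1 _ _
            (by simpa using word_mem_wtSpace ([] : List I)) (word_mem_wtSpace l₁)]
          refine Submodule.smul_mem _ _ (Submodule.subset_span
            ⟨j :: l₁, l₂, ?_, by simp [mul_assoc]⟩)
          simp only [← Multiset.cons_coe, Multiset.cons_add, hsum]
        · rw [hm (Multiset.toFinsupp (↑[j] : Multiset I))
            (Multiset.toFinsupp (↑l₁ : Multiset I)) 1 (θ j) _ _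
            (by simpa using word_mem_wtSpace [j]) (word_mem_wtSpace l₁)]
          refine Submodule.smul_mem _ _ (Submodule.subset_span
            ⟨l₁, j :: l₂, ?_, by simp [mul_assoc]⟩)
          simp only [← Multiset.cons_coe, Multiset.cons_add, Multiset.add_cons, hsum]
      · intro x y _ _ hx hy
        rw [map_add]; exact Submodule.add_mem _ hx hy
      · intro a x _ hx
        rw [map_smul]; exact Submodule.smul_mem _ _ hx

variable (hB : Admissible c r B) (hr : IsComult m r)
include hB hr

lemma B_one_theta (j : I) : B 1 (θ j) = 0 := by
  have h := hB.2.2.2 1 1 (θ j)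
  rw [one_mul, hr.2.2, map_add, BB_tmul, BB_tmul, hB.1, mul_one, one_mul] at h
  exact (add_eq_left).mp h.symm

lemma B_theta_one (i : I) : B (θ i) 1 = 0 := by
  have h := hB.2.2.1 (θ i) 1 1
  rw [one_mul, hr.2.2, map_add, LinearMap.add_apply, BB_tmul, BB_tmul, hB.1,
    mul_one, one_mul] at h
  exact (add_eq_left).mp h.symm

lemma B_one_word (l : List I) (hl : l ≠ []) : B 1 ((l.map θ).prod) = 0 := by
  induction l with
  | nil => exact absurd rfl hl
  | cons j t ih =>
      have : ((j :: t).map θ).prod = θ j * (t.map θ).prod := by simp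
      rw [this, hB.2.2.1, hr.1, BB_tmul, B_one_theta c m r B hB hr, zero_mul]

lemma B_word_one (l : List I) (hl : l ≠ []) : B ((l.map θ).prod) 1 = 0 := by
  induction l with
  | nil => exact absurd rfl hl
  | cons j t ih =>
      have : ((j :: t).map θ).prod = θ j * (t.map θ).prod := by simp
      rw [this, hB.2.2.2, hr.1, BB_tmul, B_theta_one c m r B hB hr, zero_mul]

lemma B_theta_word (i : I) (l : List I) (hl : l ≠ [i]) :
    B (θ i) ((l.map θ).prod) = 0 := by
  match l, hl with
  | [], _ => simpa using B_theta_one c m r B hB hr i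
  | [j], h =>
      have hij : i ≠ j := fun hh => h (by rw [hh])
      simpa [hB.2.1 i j, if_neg hij] using rfl
  | j :: s :: t, _ =>
      have : ((j :: s :: t).map θ).prod = θ j * ((s :: t).map θ).prod := by simp
      rw [this, hB.2.2.1, hr.2.2, map_add, LinearMap.add_apply, BB_tmul, BB_tmul,
        B_one_word c m r B hB hr (s :: t) (by simp),
        B_one_theta c m r B hB hr, mul_zero, zero_mul, add_zero]

lemma B_word_word (hm : IsTwistedMul c m) :
    ∀ l l' : List I, (↑l : Multiset I) ≠ ↑l' →
      B ((l.map θ).prod) ((l'.map θ).prod) = 0 := by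
  intro l
  induction l with
  | nil =>
      intro l' hne
      have hl' : l' ≠ [] := by rintro rfl; exact hne rfl
      simpa using B_one_word c m r B hB hr l' hl'
  | cons i t ih =>
      intro l' hne
      have hprod : ((i :: t).map θ).prod = θ i * (t.map θ).prod := by simp
      rw [hprod, hB.2.2.2]
      refine Submodule.span_induction
        (p := fun z _ => BB B (θ i ⊗ₜ[K] (t.map θ).prod) z = 0) ?_ (by simp) ?_ ?_
        (r_word_mem c m r hm hr l')
      · rintro z ⟨l₁, l₂, hsum, rfl⟩
        rw [BB_tmul]
        by_cases h1 : l₁ = [i]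
        · subst h1
          have hl2 : (↑t : Multiset I) ≠ ↑l₂ := by
            intro hh
            apply hne
            rw [← hsum, ← hh]
            simp only [← Multiset.cons_coe, Multiset.coe_nil, Multiset.cons_add, zero_add]
          rw [ih l₂ hl2, mul_zero]
        · rw [B_theta_word c m r B hB hr i l₁ h1, zero_mul]
      · intro a b _ _ ha hb; rw [map_add, ha, hb, add_zero]
      · intro a z _ hz; rw [map_smul, hz, smul_zero]

end Aux

/-- homogeneous elements of distinct weights are orthogonal for any
admissible bilinear form. -/
theorem admissible_form_orthogonal {I : Type} [Fintype I] [DecidableEq I]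
    (c : I → I → ℤ) (hc : CartanDatum c)
    (m : F I ⊗[K] F I →ₗ[K] F I ⊗[K] F I →ₗ[K] F I ⊗[K] F I)
    (hm : IsTwistedMul c m)
    (r : F I →ₗ[K] F I ⊗[K] F I) (hr : IsComult m r)
    (B : F I →ₗ[K] F I →ₗ[K] K) (hB : Admissible c r B) :
    ∀ (ν μ : I →₀ ℕ) (x y : F I), ν ≠ μ → x ∈ wtSpace ν → y ∈ wtSpace μ →
      B x y = 0 := by
  intro ν μ x y hne hx hy
  have key : ∀ l : List I, Multiset.toFinsupp (↑l : Multiset I) = ν →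
      B ((l.map θ).prod) y = 0 := by
    intro l hl
    refine Submodule.span_induction (p := fun y _ => B ((l.map θ).prod) y = 0) ?_ ?_ ?_ ?_ hy
    · rintro y ⟨l', hl', rfl⟩
      apply B_word_word c m r B hB hr hm
      intro hh
      exact hne (by rw [← hl, ← hl', hh])
    · simp
    · intro a b _ _ ha hb
      show B ((l.map θ).prod) (a + b) = 0
      rw [map_add, ha, hb, add_zero]
    · intro a z _ hz
      show B ((l.map θ).prod) (a • z) = 0
      rw [map_smul, hz, smul_zero]
  refine Submodule.span_induction (p := fun x _ => B x y = 0) ?_ ?_ ?_ ?_ hx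
  · rintro x ⟨l, hl, rfl⟩
    exact key l hl
  · simp
  · intro a b _ _ ha hb
    show B (a + b) y = 0
    rw [map_add, LinearMap.add_apply, ha, hb, add_zero]
  · intro a z _ hz
    show B (a • z) y = 0
    rw [map_smul, LinearMap.smul_apply, hz, smul_zero]
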